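/- arXiv:2109.09944 — 6 statements merged into one kernel-verified Lean document; each statement's English description precedes it below -/
import Mathlib

section
/- Let 0 < θ < 1/2. Then there exists a unique δ ∈ (0,1) such that log(1 + r^(2θ)) − 2r ≥ 0 for all r ∈ [0, δ] and log(1 + r^(2θ)) − 2r ≤ 0 for all r ≥ δ. -/
/-!
Dividing by `r`, the inequalities say that `f r := log (1 + r ^ α) / r` (with `α = 2θ`) lies
above, resp. below, the level `2`. For `α < 1` the derivative of `f` has the sign of
`α u / (1 + u) - log (1 + u)` with `u = r ^ α`, which is negative, so `f` is strictly decreasing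
on `(0, ∞)`. Since `f 1 = log 2 < 2` while `f r ≥ (2/3) r ^ (α - 1)` is large for small `r`,
`f` crosses the level `2` exactly once, at some `δ ∈ (0, 1)`.
-/

open Real Set

noncomputable def logOneAddRpowDiv (α r : ℝ) : ℝ := log (1 + r ^ α) / r

variable {α r : ℝ}

lemma hasDerivAt_logOneAddRpowDiv (hr : 0 < r) :
    HasDerivAt (logOneAddRpowDiv α)
      ((α * r ^ α / (1 + r ^ α) - log (1 + r ^ α)) / r ^ 2) r := by
  have hpos : 0 < 1 + r ^ α := by positivity
  have hlog : HasDerivAt (fun x : ℝ => log (1 + x ^ α)) (α * r ^ (α - 1) / (1 + r ^ α)) r :=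
    ((hasDerivAt_rpow_const (Or.inl hr.ne')).const_add 1).log hpos.ne'
  refine (hlog.div (hasDerivAt_id r) hr.ne').congr_deriv ?_
  rw [rpow_sub_one hr.ne', id_eq]
  field_simp

lemma strictAntiOn_logOneAddRpowDiv (hα : α < 1) :
    StrictAntiOn (logOneAddRpowDiv α) (Ioi 0) := by
  refine strictAntiOn_of_deriv_neg (convex_Ioi 0)
    (fun r hr => (hasDerivAt_logOneAddRpowDiv hr).continuousAt.continuousWithinAt) ?_
  intro r hr
  rw [interior_Ioi] at hr
  rw [(hasDerivAt_logOneAddRpowDiv hr).deriv]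
  refine div_neg_of_neg_of_pos ?_ (pow_pos hr 2)
  have hu : 0 < r ^ α := rpow_pos_of_pos hr α
  have hlog := lt_log_one_add_of_pos hu
  have hfrac : α * r ^ α / (1 + r ^ α) < r ^ α / (1 + r ^ α) := by
    gcongr ?_ / _; exact mul_lt_of_lt_one_left hu hα
  have hcmp : r ^ α / (1 + r ^ α) ≤ 2 * r ^ α / (r ^ α + 2) := by
    rw [div_le_div_iff₀ (by positivity) (by positivity)]; nlinarith
  linarith

lemma two_div_three_mul_rpow_sub_one_lt_logOneAddRpowDiv (hα : 0 ≤ α) (hr0 : 0 < r)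
    (hr1 : r ≤ 1) :
    2 / 3 * r ^ (α - 1) < logOneAddRpowDiv α r := by
  have hu : 0 < r ^ α := rpow_pos_of_pos hr0 α
  have hu1 : r ^ α ≤ 1 := rpow_le_one hr0.le hr1 hα
  have hlog := lt_log_one_add_of_pos hu
  have hcmp : 2 / 3 * r ^ α ≤ 2 * r ^ α / (r ^ α + 2) := by
    rw [le_div_iff₀ (by positivity)]; nlinarith
  rw [logOneAddRpowDiv, rpow_sub_one hr0.ne', ← mul_div_assoc]
  gcongr
  linarith

lemma logOneAddRpowDiv_one_lt_two : logOneAddRpowDiv α 1 < 2 := by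
  rw [logOneAddRpowDiv, one_rpow, div_one, one_add_one_eq_two]
  linarith [log_two_lt_d9]

lemma exists_logOneAddRpowDiv_eq_two (hα0 : 0 ≤ α) (hα1 : α < 1) :
    ∃ δ ∈ Ioo (0 : ℝ) 1, logOneAddRpowDiv α δ = 2 := by
  -- `a` is chosen so that `a ^ (α - 1) = 3`.
  set a : ℝ := 3 ^ (α - 1)⁻¹
  have ha0 : 0 < a := rpow_pos_of_pos (by norm_num) _
  have ha1 : a < 1 := rpow_lt_one_of_one_lt_of_neg (by norm_num) (inv_lt_zero.2 (by linarith))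
  have hfa : 2 < logOneAddRpowDiv α a := by
    have := two_div_three_mul_rpow_sub_one_lt_logOneAddRpowDiv hα0 ha0 ha1.le
    rw [rpow_inv_rpow (by norm_num) (by linarith : α - 1 ≠ 0)] at this
    linarith
  have hcont : ContinuousOn (logOneAddRpowDiv α) (Icc a 1) := fun r hr =>
    (hasDerivAt_logOneAddRpowDiv (ha0.trans_le hr.1)).continuousAt.continuousWithinAt
  obtain ⟨δ, hδ, hδ2⟩ :=
    intermediate_value_Ioo' ha1.le hcont ⟨logOneAddRpowDiv_one_lt_two, hfa⟩
  exact ⟨δ, ⟨ha0.trans hδ.1, hδ.2⟩, hδ2⟩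

lemma two_le_logOneAddRpowDiv_iff (hr : 0 < r) :
    2 ≤ logOneAddRpowDiv α r ↔ 0 ≤ log (1 + r ^ α) - 2 * r := by
  rw [logOneAddRpowDiv, le_div_iff₀ hr, sub_nonneg]

lemma logOneAddRpowDiv_le_two_iff (hr : 0 < r) :
    logOneAddRpowDiv α r ≤ 2 ↔ log (1 + r ^ α) - 2 * r ≤ 0 := by
  rw [logOneAddRpowDiv, div_le_iff₀ hr, sub_nonpos]

theorem exists_unique_delta (θ : ℝ) (hθ : 0 < θ) (hθ' : θ < 1/2) :
    ∃! δ : ℝ, δ ∈ Set.Ioo (0:ℝ) 1 ∧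
      (∀ r : ℝ, r ∈ Set.Icc (0:ℝ) δ → 0 ≤ Real.log (1 + r ^ (2 * θ)) - 2 * r) ∧
      (∀ r : ℝ, δ ≤ r → Real.log (1 + r ^ (2 * θ)) - 2 * r ≤ 0) := by
  have hα0 : 0 < 2 * θ := by positivity
  have hanti := strictAntiOn_logOneAddRpowDiv (α := 2 * θ) (by linarith)
  obtain ⟨δ, hδ, hδ2⟩ := exists_logOneAddRpowDiv_eq_two hα0.le (by linarith)
  refine ⟨δ, ⟨hδ, fun r hr => ?_, fun r hr => ?_⟩, ?_⟩
  · obtain rfl | hr0 := hr.1.eq_or_lt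
    · simp [zero_rpow hα0.ne']
    · exact (two_le_logOneAddRpowDiv_iff hr0).1 (hδ2.ge.trans (hanti.antitoneOn hr0 hδ.1 hr.2))
  · have hr0 := hδ.1.trans_le hr
    exact (logOneAddRpowDiv_le_two_iff hr0).1 ((hanti.antitoneOn hδ.1 hr0 hr).trans hδ2.le)
  · rintro δ' ⟨hδ', hle, hge⟩
    refine hanti.injOn hδ'.1 hδ.1 ((le_antisymm ?_ ?_).trans hδ2.symm)
    · exact (logOneAddRpowDiv_le_two_iff hδ'.1).2 (hge δ' le_rfl)
    · exact (two_le_logOneAddRpowDiv_iff hδ'.1).2 (hle δ' ⟨hδ'.1.le, le_rfl⟩)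
end

section
/- Let 0 < θ < 1/2. Then there exists δ ∈ (0,1) such that (log(1 + |ξ|^(2θ)))^2 − 4|ξ|^2 ≥ 0 for all ξ ∈ ℝ^n with |ξ| ≤ δ, and (log(1 + |ξ|^(2θ)))^2 − 4|ξ|^2 < 0 for all ξ with |ξ| > δ. -/
/-!
With `p = 2θ ∈ (0, 1)` and `r = ‖ξ‖`, the discriminant is `≥ 0` exactly when
`ψ r = exp (2 r) - (1 + r ^ p) ≤ 0`. The function `ψ` is convex on `[0, ∞)` (`exp` is convex and
`r ^ p` concave), vanishes at `0`, is negative at some small `a` because `r ^ p ≫ r` near `0`, and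
is positive at `1`. Such a function has a single zero `δ ∈ (a, 1)` after `0`: it stays `≤ 0` on
`[0, δ]` by convexity on the segment, and is positive beyond `δ` because its secant slopes increase.
-/

open Real Set

theorem ConvexOn.exists_sign_change {f : ℝ → ℝ} (hf : ConvexOn ℝ (Ici 0) f) (hf0 : f 0 = 0)
    {a b : ℝ} (ha : 0 < a) (hab : a < b) (hfa : f a < 0) (hfb : 0 < f b) :
    ∃ δ ∈ Ioo a b, (∀ r ∈ Icc 0 δ, f r ≤ 0) ∧ ∀ r, δ < r → 0 < f r := by
  have hcont : ContinuousOn f (Icc a b) :=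
    hf.continuousOn_interior.mono fun r hr => by
      rw [interior_Ici]; exact ha.trans_le hr.1
  obtain ⟨δ, ⟨haδ, hδb⟩, hfδ⟩ := intermediate_value_Ioo hab.le hcont ⟨hfa, hfb⟩
  have hδ : 0 < δ := ha.trans haδ
  refine ⟨δ, ⟨haδ, hδb⟩, fun r hr => ?_, fun r hδr => ?_⟩
  · have := hf.le_on_segment self_mem_Ici hδ.le (by rwa [segment_eq_Icc hδ.le])
    rwa [hf0, hfδ, max_self] at this
  · have hslope := hf.slope_mono_adjacent ha.le (hδ.trans hδr).le haδ hδr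
    rw [hfδ, sub_zero] at hslope
    have hleft : 0 < (0 - f a) / (δ - a) := div_pos (by linarith) (by linarith)
    exact (div_pos_iff_of_pos_right (sub_pos.2 hδr)).1 (hleft.trans_le hslope)

theorem sq_log_sub_four_mul_sq_nonneg_iff {x t : ℝ} (hx : 1 ≤ x) (ht : 0 ≤ t) :
    0 ≤ log x ^ 2 - 4 * t ^ 2 ↔ exp (2 * t) ≤ x := by
  rw [← le_log_iff_exp_le (by linarith), ← sq_le_sq₀ (by positivity) (log_nonneg hx), sub_nonneg]
  ring_nf

theorem convexOn_exp_two_mul_sub_one_add_rpow {p : ℝ} (hp0 : 0 ≤ p) (hp1 : p ≤ 1) :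
    ConvexOn ℝ (Ici 0) fun r : ℝ => exp (2 * r) - (1 + r ^ p) := by
  have hexp : ConvexOn ℝ (Ici 0) fun r : ℝ => exp (2 * r) :=
    (convexOn_exp.comp_linearMap (LinearMap.mul ℝ ℝ 2)).subset (subset_univ _) (convex_Ici 0)
  have hrpow : ConcaveOn ℝ (Ici 0) fun r : ℝ => 1 + r ^ p :=
    (concaveOn_const 1 (convex_Ici 0)).add (concaveOn_rpow hp0 hp1)
  exact hexp.sub hrpow

theorem exists_exp_two_mul_lt_one_add_rpow {p : ℝ} (hp0 : 0 ≤ p) (hp1 : p < 1) :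
    ∃ a ∈ Ioo (0 : ℝ) 1, exp (2 * a) < 1 + a ^ p := by
  -- `a ^ (1 - p) = 1 / 9`, so `a ^ p = 9 * a` while `exp (2 * a) < 1 / (1 - 2 * a) < 1 + 9 * a`
  set a : ℝ := (1 / 9) ^ (1 / (1 - p))
  have ha : 0 < a := by positivity
  have ha_le : a ≤ 1 / 9 := by
    refine (rpow_le_rpow_of_exponent_ge (by norm_num) (by norm_num) ?_).trans_eq (rpow_one _)
    rw [one_le_div (by linarith)]
    linarith
  have hpow : a ^ p = 9 * a := by
    have h : a ^ (1 - p) = 1 / 9 := by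
      rw [← rpow_mul (by norm_num), one_div_mul_cancel (by linarith), rpow_one]
    have := rpow_add ha p (1 - p)
    rw [add_sub_cancel, rpow_one, h] at this
    linarith
  refine ⟨a, ⟨ha, by linarith⟩, ?_⟩
  calc exp (2 * a) < 1 / (1 - 2 * a) :=
        exp_bound_div_one_sub_of_interval' (by positivity) (by linarith)
    _ ≤ 1 + a ^ p := by
      rw [hpow, div_le_iff₀ (by linarith)]
      nlinarith

theorem exists_delta_discriminant (n : ℕ) (θ : ℝ) (hθ : 0 < θ) (hθ' : θ < 1/2) :
    ∃ δ : ℝ, δ ∈ Set.Ioo (0:ℝ) 1 ∧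
      (∀ ξ : EuclideanSpace ℝ (Fin n), ‖ξ‖ ≤ δ →
        0 ≤ (Real.log (1 + ‖ξ‖ ^ (2 * θ)))^2 - 4 * ‖ξ‖^2) ∧
      (∀ ξ : EuclideanSpace ℝ (Fin n), δ < ‖ξ‖ →
        (Real.log (1 + ‖ξ‖ ^ (2 * θ)))^2 - 4 * ‖ξ‖^2 < 0) := by
  obtain ⟨a, ⟨ha0, ha1⟩, hfa⟩ :=
    exists_exp_two_mul_lt_one_add_rpow (p := 2 * θ) (by positivity) (by linarith)
  have hf1 : 0 < exp (2 * 1) - (1 + (1 : ℝ) ^ (2 * θ)) := by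
    rw [one_rpow]; linarith [add_one_le_exp (2 * 1 : ℝ)]
  obtain ⟨δ, ⟨haδ, hδ1⟩, hle, hgt⟩ :=
    (convexOn_exp_two_mul_sub_one_add_rpow (by positivity) (by linarith)).exists_sign_change
      (by simp [zero_rpow (by positivity : 2 * θ ≠ 0)]) ha0 ha1 (by linarith) hf1
  have hone_le (r : ℝ) (hr : 0 ≤ r) : 1 ≤ 1 + r ^ (2 * θ) := by
    linarith [rpow_nonneg hr (2 * θ)]
  refine ⟨δ, ⟨ha0.trans haδ, hδ1⟩, fun ξ hξ => ?_, fun ξ hξ => ?_⟩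
  · rw [sq_log_sub_four_mul_sq_nonneg_iff (hone_le _ (norm_nonneg ξ)) (norm_nonneg ξ)]
    linarith [hle ‖ξ‖ ⟨norm_nonneg ξ, hξ⟩]
  · rw [← not_le, sq_log_sub_four_mul_sq_nonneg_iff (hone_le _ (norm_nonneg ξ)) (norm_nonneg ξ)]
    linarith [hgt ‖ξ‖ hξ]
end

section
/- Let p > −1 be real. Then there exist constants C₁, C₂ > 0 and T > 0 such that C₁ t^(−(p+1)/2) ≤ ∫₀¹ (1 + r²)^(−t) r^p dr ≤ C₂ t^(−(p+1)/2) for all t ≥ T. -/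
open Real MeasureTheory Set intervalIntegral

/-- integrability of `exp (-c s^2) * s^p` on `[0, b]` for `p > -1`, `c ≥ 0`. -/
lemma Ip_aux_integrable (p : ℝ) (hp : -1 < p) (c : ℝ) (hc : 0 ≤ c) (b : ℝ) (hb : 0 ≤ b) :
    IntervalIntegrable (fun s : ℝ => Real.exp (-c * s ^ 2) * s ^ p) volume 0 b := by
  apply IntervalIntegrable.mono_fun' (g := fun s : ℝ => s ^ p)
    (intervalIntegrable_rpow' hp)
  · apply Measurable.aestronglyMeasurable
    exact (measurable_id.pow_const 2).const_mul (-c) |>.exp.mul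
      (measurable_id.pow_const p)
  · rw [uIoc_of_le hb]
    filter_upwards [ae_restrict_mem measurableSet_Ioc] with s hs
    have hs0 : 0 ≤ s := le_of_lt hs.1
    have h1 : Real.exp (-c * s ^ 2) ≤ 1 := by
      rw [← Real.exp_zero]
      apply Real.exp_le_exp.2
      nlinarith [sq_nonneg s]
    have h2 : (0:ℝ) ≤ s ^ p := Real.rpow_nonneg hs0 p
    have : |Real.exp (-c * s ^ 2) * s ^ p| = Real.exp (-c * s ^ 2) * s ^ p := by
      rw [abs_of_nonneg (mul_nonneg (Real.exp_pos _).le h2)]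
    simp only [Real.norm_eq_abs, this]
    calc Real.exp (-c * s ^ 2) * s ^ p ≤ 1 * s ^ p := by
          exact mul_le_mul_of_nonneg_right h1 h2
      _ = s ^ p := one_mul _

/-- integrability of `(1+r^2)^(-t) * r^p` on `[0,1]`. -/
lemma Ip_aux_integrable' (p : ℝ) (hp : -1 < p) (t : ℝ) (ht : 0 ≤ t) :
    IntervalIntegrable (fun r : ℝ => (1 + r ^ 2) ^ (-t) * r ^ p) volume 0 1 := by
  apply IntervalIntegrable.mono_fun' (g := fun s : ℝ => s ^ p)
    (intervalIntegrable_rpow' hp)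
  · apply Measurable.aestronglyMeasurable
    exact ((measurable_const.add (measurable_id.pow_const 2)).pow_const (-t)).mul
      (measurable_id.pow_const p)
  · rw [uIoc_of_le (by norm_num : (0:ℝ) ≤ 1)]
    filter_upwards [ae_restrict_mem measurableSet_Ioc] with r hr
    have hr0 : 0 ≤ r := le_of_lt hr.1
    have hb : (1:ℝ) ≤ 1 + r ^ 2 := by nlinarith [sq_nonneg r]
    have h1 : (1 + r ^ 2) ^ (-t) ≤ 1 :=
      Real.rpow_le_one_of_one_le_of_nonpos hb (by linarith)
    have h1' : (0:ℝ) ≤ (1 + r ^ 2) ^ (-t) := Real.rpow_nonneg (by linarith) _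
    have h2 : (0:ℝ) ≤ r ^ p := Real.rpow_nonneg hr0 p
    have : |(1 + r ^ 2) ^ (-t) * r ^ p| = (1 + r ^ 2) ^ (-t) * r ^ p :=
      abs_of_nonneg (mul_nonneg h1' h2)
    simp only [Real.norm_eq_abs, this]
    calc (1 + r ^ 2) ^ (-t) * r ^ p ≤ 1 * r ^ p :=
          mul_le_mul_of_nonneg_right h1 h2
      _ = r ^ p := one_mul _

/-- Scaling: `∫₀¹ exp(-(c t) r²) r^p dr = t^(-(p+1)/2) ∫₀^{√t} exp(-c s²) s^p ds`. -/
lemma Ip_aux_scale (p c t : ℝ) (ht : 0 < t) :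
    (∫ r in (0:ℝ)..1, Real.exp (-(c * t) * r ^ 2) * r ^ p)
      = t ^ (-(p+1)/2) * ∫ s in (0:ℝ)..Real.sqrt t, Real.exp (-c * s ^ 2) * s ^ p := by
  have hst : 0 < Real.sqrt t := Real.sqrt_pos.2 ht
  have hsp : Real.sqrt t ^ p = t ^ (p / 2) := by
    rw [Real.sqrt_eq_rpow, ← Real.rpow_mul ht.le]
    ring_nf
  have key : (∫ r in (0:ℝ)..1,
      (fun s => Real.exp (-c * s ^ 2) * s ^ p) (Real.sqrt t * r))
      = (Real.sqrt t)⁻¹ * ∫ s in (0:ℝ)..Real.sqrt t, Real.exp (-c * s ^ 2) * s ^ p := by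
    have h := intervalIntegral.integral_comp_mul_left (a := 0) (b := 1)
      (fun s => Real.exp (-c * s ^ 2) * s ^ p) (ne_of_gt hst)
    simpa [smul_eq_mul] using h
  have congr1 : (∫ r in (0:ℝ)..1,
      (fun s => Real.exp (-c * s ^ 2) * s ^ p) (Real.sqrt t * r))
      = ∫ r in (0:ℝ)..1, t ^ (p / 2) * (Real.exp (-(c * t) * r ^ 2) * r ^ p) := by
    apply intervalIntegral.integral_congr
    intro r hr
    rw [uIcc_of_le (by norm_num : (0:ℝ) ≤ 1)] at hr
    have hr0 : 0 ≤ r := hr.1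
    have h1 : (Real.sqrt t * r) ^ 2 = t * r ^ 2 := by
      rw [mul_pow, Real.sq_sqrt ht.le]
    have h2 : (Real.sqrt t * r) ^ p = t ^ (p / 2) * r ^ p := by
      rw [Real.mul_rpow (Real.sqrt_nonneg t) hr0, hsp]
    simp only [h1, h2]
    ring_nf
  have hpow : t ^ (-(p+1)/2) = t ^ (-(p / 2)) * (Real.sqrt t)⁻¹ := by
    rw [Real.sqrt_eq_rpow, ← Real.rpow_neg ht.le, ← Real.rpow_add ht]
    ring_nf
  rw [intervalIntegral.integral_const_mul] at congr1
  have hI : (∫ r in (0:ℝ)..1, Real.exp (-(c * t) * r ^ 2) * r ^ p)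
      = t ^ (-(p / 2)) * ((Real.sqrt t)⁻¹
        * ∫ s in (0:ℝ)..Real.sqrt t, Real.exp (-c * s ^ 2) * s ^ p) := by
    rw [← key, congr1, ← mul_assoc, Real.rpow_neg ht.le,
      inv_mul_cancel₀ (ne_of_gt (Real.rpow_pos_of_pos ht _)), one_mul]
  rw [hI, hpow]
  ring

theorem Ip_asymptotics (p : ℝ) (hp : -1 < p) :
    ∃ C₁ C₂ T : ℝ, 0 < C₁ ∧ 0 < C₂ ∧ 0 < T ∧
      ∀ t : ℝ, T ≤ t →
        C₁ * t ^ (-(p+1)/2) ≤ ∫ r in (0:ℝ)..1, (1 + r^2) ^ (-t) * r ^ p ∧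
        (∫ r in (0:ℝ)..1, (1 + r^2) ^ (-t) * r ^ p) ≤ C₂ * t ^ (-(p+1)/2) := by
  set C₁ : ℝ := ∫ s in (0:ℝ)..1, Real.exp (-1 * s ^ 2) * s ^ p with hC₁
  set C₂ : ℝ := ∫ s in Ioi (0:ℝ), s ^ p * Real.exp (-(1/2 : ℝ) * s ^ 2) with hC₂
  have hC₂int : IntegrableOn (fun s : ℝ => s ^ p * Real.exp (-(1/2 : ℝ) * s ^ 2)) (Ioi 0) :=
    integrableOn_rpow_mul_exp_neg_mul_sq (by norm_num) hp
  -- tail bound: for any b ≥ 0, ∫₀ᵇ exp(-s²/2) s^p ≤ C₂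
  have tail : ∀ b : ℝ, 0 ≤ b →
      (∫ s in (0:ℝ)..b, Real.exp (-(1/2 : ℝ) * s ^ 2) * s ^ p) ≤ C₂ := by
    intro b hb
    rw [intervalIntegral.integral_of_le hb]
    have : (∫ s in Ioc (0:ℝ) b, Real.exp (-(1/2 : ℝ) * s ^ 2) * s ^ p)
        = ∫ s in Ioc (0:ℝ) b, s ^ p * Real.exp (-(1/2 : ℝ) * s ^ 2) := by
      simp_rw [mul_comm]
    rw [this, hC₂]
    apply setIntegral_mono_set hC₂int
    · filter_upwards [ae_restrict_mem measurableSet_Ioi] with s hs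
      exact mul_nonneg (Real.rpow_nonneg (le_of_lt hs) p) (Real.exp_pos _).le
    · exact HasSubset.Subset.eventuallyLE Ioc_subset_Ioi_self
  have hC₁pos : 0 < C₁ := by
    apply intervalIntegral.intervalIntegral_pos_of_pos_on
      (Ip_aux_integrable p hp 1 one_pos.le 1 one_pos.le)
    · intro x hx
      exact mul_pos (Real.exp_pos _) (Real.rpow_pos_of_pos hx.1 p)
    · norm_num
  have hC₂pos : 0 < C₂ := by
    have h1 : 0 < ∫ s in (0:ℝ)..1, Real.exp (-(1/2 : ℝ) * s ^ 2) * s ^ p := by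
      apply intervalIntegral.intervalIntegral_pos_of_pos_on
        (Ip_aux_integrable p hp (1/2) (by norm_num) 1 one_pos.le)
      · intro x hx
        exact mul_pos (Real.exp_pos _) (Real.rpow_pos_of_pos hx.1 p)
      · norm_num
    exact lt_of_lt_of_le h1 (tail 1 one_pos.le)
  refine ⟨C₁, C₂, 1, hC₁pos, hC₂pos, one_pos, fun t ht => ?_⟩
  have ht0 : 0 < t := lt_of_lt_of_le one_pos ht
  have hst1 : 1 ≤ Real.sqrt t := by
    rw [show (1:ℝ) = Real.sqrt 1 by simp]
    exact Real.sqrt_le_sqrt ht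
  have hst0 : 0 ≤ Real.sqrt t := Real.sqrt_nonneg t
  have htp : 0 < t ^ (-(p+1)/2) := Real.rpow_pos_of_pos ht0 _
  -- pointwise bounds on [0,1]
  have ptlo : ∀ r ∈ Icc (0:ℝ) 1,
      Real.exp (-(1 * t) * r ^ 2) * r ^ p ≤ (1 + r ^ 2) ^ (-t) * r ^ p := by
    intro r hr
    have hb : (0:ℝ) < 1 + r ^ 2 := by nlinarith [sq_nonneg r]
    have hlog : Real.log (1 + r ^ 2) ≤ r ^ 2 := by
      have := Real.log_le_sub_one_of_pos hb
      linarith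
    have : (1 + r ^ 2) ^ (-t) = Real.exp (-t * Real.log (1 + r ^ 2)) := by
      rw [Real.rpow_def_of_pos hb]; ring_nf
    rw [this]
    apply mul_le_mul_of_nonneg_right _ (Real.rpow_nonneg hr.1 p)
    apply Real.exp_le_exp.2
    nlinarith
  have pthi : ∀ r ∈ Icc (0:ℝ) 1,
      (1 + r ^ 2) ^ (-t) * r ^ p ≤ Real.exp (-((1/2 : ℝ) * t) * r ^ 2) * r ^ p := by
    intro r hr
    have hx0 : 0 ≤ r ^ 2 := sq_nonneg r
    have hx1 : r ^ 2 ≤ 1 := by nlinarith [hr.1, hr.2]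
    have hb : (0:ℝ) < 1 + r ^ 2 := by linarith
    -- exp(x/2) ≤ 1 + x for x ∈ [0,1]
    have hexp : Real.exp (r ^ 2 / 2) ≤ 1 + r ^ 2 := by
      have h1 : 1 - r ^ 2 / 2 ≤ Real.exp (-(r ^ 2 / 2)) := by
        have := Real.add_one_le_exp (-(r ^ 2 / 2))
        linarith
      have h2 : (0:ℝ) < 1 - r ^ 2 / 2 := by linarith
      have hA : Real.exp (r ^ 2 / 2) * (1 - r ^ 2 / 2) ≤ 1 := by
        calc Real.exp (r ^ 2 / 2) * (1 - r ^ 2 / 2)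
            ≤ Real.exp (r ^ 2 / 2) * Real.exp (-(r ^ 2 / 2)) :=
              mul_le_mul_of_nonneg_left h1 (Real.exp_pos _).le
          _ = 1 := by rw [← Real.exp_add]; simp
      nlinarith [Real.exp_pos (r ^ 2 / 2)]
    have hlog : r ^ 2 / 2 ≤ Real.log (1 + r ^ 2) := by
      calc r ^ 2 / 2 = Real.log (Real.exp (r ^ 2 / 2)) := (Real.log_exp _).symm
        _ ≤ Real.log (1 + r ^ 2) := Real.log_le_log (Real.exp_pos _) hexp
    have : (1 + r ^ 2) ^ (-t) = Real.exp (-t * Real.log (1 + r ^ 2)) := by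
      rw [Real.rpow_def_of_pos hb]; ring_nf
    rw [this]
    apply mul_le_mul_of_nonneg_right _ (Real.rpow_nonneg hr.1 p)
    apply Real.exp_le_exp.2
    nlinarith
  have hint1 := Ip_aux_integrable p hp (1 * t) (by linarith) 1 one_pos.le
  have hint2 := Ip_aux_integrable p hp ((1/2 : ℝ) * t) (by linarith) 1 one_pos.le
  have hintI := Ip_aux_integrable' p hp t ht0.le
  constructor
  · -- lower bound
    have step1 : (∫ r in (0:ℝ)..1, Real.exp (-(1 * t) * r ^ 2) * r ^ p)
        ≤ ∫ r in (0:ℝ)..1, (1 + r ^ 2) ^ (-t) * r ^ p :=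
      intervalIntegral.integral_mono_on one_pos.le hint1 hintI ptlo
    have step2 : (∫ r in (0:ℝ)..1, Real.exp (-(1 * t) * r ^ 2) * r ^ p)
        = t ^ (-(p+1)/2) * ∫ s in (0:ℝ)..Real.sqrt t, Real.exp (-1 * s ^ 2) * s ^ p :=
      Ip_aux_scale p 1 t ht0
    have step3 : C₁ ≤ ∫ s in (0:ℝ)..Real.sqrt t, Real.exp (-1 * s ^ 2) * s ^ p := by
      have hi1 := Ip_aux_integrable p hp 1 one_pos.le 1 one_pos.le
      have hi2 : IntervalIntegrable (fun s : ℝ => Real.exp (-1 * s ^ 2) * s ^ p)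
          volume 1 (Real.sqrt t) := by
        have := Ip_aux_integrable p hp 1 one_pos.le (Real.sqrt t) hst0
        exact this.mono_set' (by
          rw [uIoc_of_le hst1, uIoc_of_le hst0]
          exact Ioc_subset_Ioc one_pos.le le_rfl)
      have hadd := intervalIntegral.integral_add_adjacent_intervals hi1 hi2
      have hnn : 0 ≤ ∫ s in (1:ℝ)..Real.sqrt t, Real.exp (-1 * s ^ 2) * s ^ p := by
        apply intervalIntegral.integral_nonneg hst1
        intro x hx
        exact mul_nonneg (Real.exp_pos _).le (Real.rpow_nonneg (by linarith [hx.1]) p)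
      rw [hC₁]
      linarith [hadd]
    calc C₁ * t ^ (-(p+1)/2) ≤ (∫ s in (0:ℝ)..Real.sqrt t,
          Real.exp (-1 * s ^ 2) * s ^ p) * t ^ (-(p+1)/2) :=
          mul_le_mul_of_nonneg_right step3 htp.le
      _ = t ^ (-(p+1)/2) * ∫ s in (0:ℝ)..Real.sqrt t, Real.exp (-1 * s ^ 2) * s ^ p :=
          mul_comm _ _
      _ = ∫ r in (0:ℝ)..1, Real.exp (-(1 * t) * r ^ 2) * r ^ p := step2.symm
      _ ≤ _ := step1
  · -- upper bound
    have step1 : (∫ r in (0:ℝ)..1, (1 + r ^ 2) ^ (-t) * r ^ p)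
        ≤ ∫ r in (0:ℝ)..1, Real.exp (-((1/2 : ℝ) * t) * r ^ 2) * r ^ p :=
      intervalIntegral.integral_mono_on one_pos.le hintI hint2 pthi
    have step2 : (∫ r in (0:ℝ)..1, Real.exp (-((1/2 : ℝ) * t) * r ^ 2) * r ^ p)
        = t ^ (-(p+1)/2) * ∫ s in (0:ℝ)..Real.sqrt t,
            Real.exp (-(1/2 : ℝ) * s ^ 2) * s ^ p :=
      Ip_aux_scale p (1/2) t ht0
    have step3 : (∫ s in (0:ℝ)..Real.sqrt t, Real.exp (-(1/2 : ℝ) * s ^ 2) * s ^ p) ≤ C₂ :=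
      tail (Real.sqrt t) hst0
    calc (∫ r in (0:ℝ)..1, (1 + r ^ 2) ^ (-t) * r ^ p)
        ≤ ∫ r in (0:ℝ)..1, Real.exp (-((1/2 : ℝ) * t) * r ^ 2) * r ^ p := step1
      _ = t ^ (-(p+1)/2) * ∫ s in (0:ℝ)..Real.sqrt t,
            Real.exp (-(1/2 : ℝ) * s ^ 2) * s ^ p := step2
      _ ≤ t ^ (-(p+1)/2) * C₂ := mul_le_mul_of_nonneg_left step3 htp.le
      _ = C₂ * t ^ (-(p+1)/2) := mul_comm _ _
end

section
/- Let 0 ≤ θ ≤ 1/2 and q > −1. Then there exist constants C₁, C₂ > 0 and T > 0 such that C₁ t^(−(q+1)/(2(1−θ))) ≤ ∫₀¹ (1 + r^(2−2θ))^(−t) r^q dr ≤ C₂ t^(−(q+1)/(2(1−θ))) for all t ≥ T. -/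
/-!
Write `α = 2 - 2θ > 0`. For `0 ≤ x ≤ 2` we have `x / 2 ≤ log (1 + x) ≤ x`, so
`exp (-t x) ≤ (1 + x) ^ (-t) ≤ exp (-(t / 2) x)`. The upper bound then follows by dominating the
integral by the Gamma-type integral `∫₀^∞ r^q exp (-(t/2) r^α) dr = (t/2)^(-(q+1)/α) Γ((q+1)/α) / α`.
For the lower bound, restrict to `0 ≤ r ≤ t^(-1/α)`, where `t r^α ≤ 1` and the integrand is at
least `exp (-1) r^q`; integrating `r^q` over that interval gives `t^(-(q+1)/α) / (q+1)`.
-/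

open Real MeasureTheory Set intervalIntegral

lemma half_le_log_one_add {x : ℝ} (hx₀ : 0 ≤ x) (hx₂ : x ≤ 2) : x / 2 ≤ log (1 + x) :=
  calc x / 2 ≤ 2 * x / (x + 2) := by
        rw [div_le_div_iff₀ two_pos (by linarith)]; nlinarith
    _ ≤ log (1 + x) := le_log_one_add_of_nonneg hx₀

lemma one_add_rpow_neg_le_exp {x t : ℝ} (hx₀ : 0 ≤ x) (hx₂ : x ≤ 2) (ht : 0 ≤ t) :
    (1 + x) ^ (-t) ≤ exp (-(t / 2) * x) := by
  rw [rpow_def_of_pos (by linarith), exp_le_exp]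
  nlinarith [half_le_log_one_add hx₀ hx₂]

lemma exp_neg_mul_le_one_add_rpow_neg {x t : ℝ} (hx : 0 ≤ x) (ht : 0 ≤ t) :
    exp (-(t * x)) ≤ (1 + x) ^ (-t) := by
  rw [rpow_def_of_pos (by linarith), exp_le_exp]
  nlinarith [log_le_sub_one_of_pos (show 0 < 1 + x by linarith)]

section

variable {α q t : ℝ}

lemma intervalIntegrable_one_add_rpow_rpow_neg_mul_rpow (hq : -1 < q) (ht : 0 ≤ t) :
    IntervalIntegrable (fun r : ℝ => (1 + r ^ α) ^ (-t) * r ^ q) volume 0 1 := by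
  refine (intervalIntegrable_rpow' hq).mono_fun'
    (Measurable.aestronglyMeasurable (by fun_prop)) ?_
  rw [uIoc_of_le zero_le_one, Filter.EventuallyLE, ae_restrict_iff' measurableSet_Ioc]
  refine .of_forall fun r hr => ?_
  have hr₀ : 0 ≤ r := hr.1.le
  have hbase : 1 ≤ 1 + r ^ α := le_add_of_nonneg_right (by positivity)
  rw [norm_mul, norm_of_nonneg (by positivity), norm_of_nonneg (by positivity)]
  exact mul_le_of_le_one_left (by positivity)
    (rpow_le_one_of_one_le_of_nonpos hbase (neg_nonpos.2 ht))

theorem integral_one_add_rpow_rpow_neg_mul_rpow_le (hα : 0 < α) (hq : -1 < q) (ht : 0 < t) :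
    ∫ r in (0:ℝ)..1, (1 + r ^ α) ^ (-t) * r ^ q ≤
      2 ^ ((q + 1) / α) * (Gamma ((q + 1) / α) / α) * t ^ (-(q + 1) / α) := by
  set g : ℝ → ℝ := fun r => r ^ q * exp (-(t / 2) * r ^ α)
  have hg : IntegrableOn g (Ioi 0) :=
    integrableOn_rpow_mul_exp_neg_mul_rpow hq hα (by positivity)
  have hfg : ∀ r ∈ Icc (0:ℝ) 1, (1 + r ^ α) ^ (-t) * r ^ q ≤ g r := fun r hr => by
    rw [mul_comm]
    exact mul_le_mul_of_nonneg_left (one_add_rpow_neg_le_exp (rpow_nonneg hr.1 _)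
      ((rpow_le_one hr.1 hr.2 hα.le).trans one_le_two) ht.le) (rpow_nonneg hr.1 _)
  calc ∫ r in (0:ℝ)..1, (1 + r ^ α) ^ (-t) * r ^ q
      ≤ ∫ r in (0:ℝ)..1, g r :=
        integral_mono_on zero_le_one (intervalIntegrable_one_add_rpow_rpow_neg_mul_rpow hq ht.le)
          ((intervalIntegrable_iff_integrableOn_Ioc_of_le zero_le_one).2
            (hg.mono_set Ioc_subset_Ioi_self)) hfg
    _ ≤ ∫ r in Ioi 0, g r := by
        rw [integral_of_le zero_le_one]
        refine setIntegral_mono_set hg ?_ Ioc_subset_Ioi_self.eventuallyLE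
        exact (ae_restrict_iff' measurableSet_Ioi).2 (.of_forall fun r hr => by
          have : 0 ≤ r := le_of_lt hr
          positivity)
    _ = (t / 2) ^ (-(q + 1) / α) * (1 / α) * Gamma ((q + 1) / α) :=
        integral_rpow_mul_exp_neg_mul_rpow hα hq (by positivity)
    _ = _ := by
        rw [div_rpow ht.le zero_le_two, neg_div, rpow_neg zero_le_two, div_inv_eq_mul]
        ring

theorem le_integral_one_add_rpow_rpow_neg_mul_rpow (hα : 0 < α) (hq : -1 < q) (ht : 1 ≤ t) :
    exp (-1) / (q + 1) * t ^ (-(q + 1) / α) ≤ ∫ r in (0:ℝ)..1, (1 + r ^ α) ^ (-t) * r ^ q := by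
  have ht₀ : 0 < t := one_pos.trans_le ht
  have hf := intervalIntegrable_one_add_rpow_rpow_neg_mul_rpow (α := α) hq ht₀.le
  set s := t ^ (-α⁻¹)
  have hs₀ : 0 ≤ s := by positivity
  have hs₁ : s ≤ 1 := rpow_le_one_of_one_le_of_nonpos ht (by simp [hα.le])
  have hsα : s ^ α = t⁻¹ := by
    rw [← rpow_mul ht₀.le, neg_mul, inv_mul_cancel₀ hα.ne', rpow_neg_one]
  have hlow : ∀ r ∈ Icc 0 s, exp (-1) * r ^ q ≤ (1 + r ^ α) ^ (-t) * r ^ q := fun r hr => by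
    have hrα : t * r ^ α ≤ 1 := by
      rw [← le_div_iff₀' ht₀, one_div, ← hsα]
      exact rpow_le_rpow hr.1 hr.2 hα.le
    refine mul_le_mul_of_nonneg_right ?_ (rpow_nonneg hr.1 _)
    calc exp (-1) ≤ exp (-(t * r ^ α)) := exp_le_exp.2 (neg_le_neg hrα)
      _ ≤ (1 + r ^ α) ^ (-t) := exp_neg_mul_le_one_add_rpow_neg (rpow_nonneg hr.1 _) ht₀.le
  calc exp (-1) / (q + 1) * t ^ (-(q + 1) / α)
      = ∫ r in (0:ℝ)..s, exp (-1) * r ^ q := by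
        rw [intervalIntegral.integral_const_mul, integral_rpow (.inl hq), zero_rpow (by linarith), sub_zero,
          ← rpow_mul ht₀.le]
        field_simp
    _ ≤ ∫ r in (0:ℝ)..s, (1 + r ^ α) ^ (-t) * r ^ q :=
        integral_mono_on hs₀ ((intervalIntegrable_rpow' hq).const_mul _)
          (hf.mono_set (uIcc_subset_uIcc left_mem_uIcc (by simp [hs₀, hs₁]))) hlow
    _ ≤ ∫ r in (0:ℝ)..1, (1 + r ^ α) ^ (-t) * r ^ q := by
        refine integral_mono_interval le_rfl hs₀ hs₁ ?_ hf
        exact (ae_restrict_iff' measurableSet_Ioc).2 (.of_forall fun r hr => by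
          have : 0 ≤ r := hr.1.le
          positivity)

end

theorem Ip_theta_asymptotics_general (θ q : ℝ) (hθ' : θ ≤ 1/2) (hq : -1 < q) :
    ∃ C₁ C₂ T : ℝ, 0 < C₁ ∧ 0 < C₂ ∧ 0 < T ∧
      ∀ t : ℝ, T ≤ t →
        C₁ * t ^ (-(q+1)/(2*(1-θ))) ≤ ∫ r in (0:ℝ)..1, (1 + r ^ (2 - 2*θ)) ^ (-t) * r ^ q ∧
        (∫ r in (0:ℝ)..1, (1 + r ^ (2 - 2*θ)) ^ (-t) * r ^ q) ≤ C₂ * t ^ (-(q+1)/(2*(1-θ))) := by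
  have hα : 0 < 2 - 2 * θ := by linarith
  have hq₁ : 0 < q + 1 := by linarith
  have hΓ : 0 < Gamma ((q + 1) / (2 - 2 * θ)) := Gamma_pos_of_pos (by positivity)
  rw [show 2 * (1 - θ) = 2 - 2 * θ by ring]
  exact ⟨exp (-1) / (q + 1), 2 ^ ((q + 1) / (2 - 2 * θ)) * (Gamma ((q + 1) / (2 - 2 * θ)) /
    (2 - 2 * θ)), 1, by positivity, by positivity, one_pos, fun t ht =>
    ⟨le_integral_one_add_rpow_rpow_neg_mul_rpow hα hq ht,
      integral_one_add_rpow_rpow_neg_mul_rpow_le hα hq (one_pos.trans_le ht)⟩⟩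

theorem Ip_theta_asymptotics (θ q : ℝ) (hθ : 0 ≤ θ) (hθ' : θ ≤ 1/2) (hq : -1 < q) :
    ∃ C₁ C₂ T : ℝ, 0 < C₁ ∧ 0 < C₂ ∧ 0 < T ∧
      ∀ t : ℝ, T ≤ t →
        C₁ * t ^ (-(q+1)/(2*(1-θ))) ≤ ∫ r in (0:ℝ)..1, (1 + r ^ (2 - 2*θ)) ^ (-t) * r ^ q ∧
        (∫ r in (0:ℝ)..1, (1 + r ^ (2 - 2*θ)) ^ (-t) * r ^ q) ≤ C₂ * t ^ (-(q+1)/(2*(1-θ))) :=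
  Ip_theta_asymptotics_general θ q hθ' hq
end

section
/- Let θ > 0 and q > −1. Then there exist constants C₁, C₂ > 0 and T > 0 such that (C₁/θ) t^(−(q+1)/(2θ)) ≤ ∫₀¹ (1 + r^(2θ))^(−t) r^q dr ≤ (C₂/θ) t^(−(q+1)/(2θ)) for all t ≥ T. -/
open Real Set MeasureTheory intervalIntegral

lemma aux_integrable {p q b : ℝ} (hp : 0 < p) (hq : -1 < q) (hb : 0 < b) :
    IntegrableOn (fun x : ℝ => x ^ q * exp (-b * x ^ p)) (Ioi 0) := by
  by_contra h
  have h1 := integral_rpow_mul_exp_neg_mul_rpow hp hq hb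
  rw [MeasureTheory.integral_undef h] at h1
  have h2 : 0 < b ^ (-(q + 1) / p) * (1 / p) * Real.Gamma ((q + 1) / p) := by
    have hg := Real.Gamma_pos_of_pos (div_pos (by linarith : (0:ℝ) < q + 1) hp)
    have := Real.rpow_pos_of_pos hb (-(q + 1) / p)
    positivity
  rw [← h1] at h2; exact lt_irrefl _ h2

lemma aux_logA {x : ℝ} (hx : 0 ≤ x) (hx1 : x ≤ 1) : x / 2 ≤ Real.log (1 + x) := by
  have h0 : (0:ℝ) < 1 + x := by linarith
  have h1 := Real.log_le_sub_one_of_pos (show (0:ℝ) < (1 + x)⁻¹ by positivity)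
  rw [Real.log_inv] at h1
  have h2 : (1 + x) * (1 + x)⁻¹ = 1 := mul_inv_cancel₀ (ne_of_gt h0)
  nlinarith [inv_nonneg.mpr h0.le]

lemma aux_A {x t : ℝ} (hx : 0 ≤ x) (hx1 : x ≤ 1) (ht : 0 ≤ t) :
    (1 + x) ^ (-t) ≤ exp (-(t / 2) * x) := by
  rw [Real.rpow_def_of_pos (by linarith), Real.exp_le_exp]
  have := aux_logA hx hx1
  nlinarith

lemma aux_B {x t : ℝ} (hx : 0 ≤ x) (ht : 0 ≤ t) :
    exp (-t * x) ≤ (1 + x) ^ (-t) := by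
  rw [Real.rpow_def_of_pos (by linarith), Real.exp_le_exp]
  have h1 := Real.log_le_sub_one_of_pos (show (0:ℝ) < 1 + x by linarith)
  nlinarith

lemma aux_f_int {θ q t : ℝ} (hq : -1 < q) (ht : 0 ≤ t) :
    IntegrableOn (fun r : ℝ => (1 + r ^ (2 * θ)) ^ (-t) * r ^ q) (Ioc 0 1) := by
  have hr : IntegrableOn (fun r : ℝ => r ^ q) (Ioc 0 1) := by
    have h := intervalIntegral.intervalIntegrable_rpow' (a := 0) (b := 1) hq
    rwa [intervalIntegrable_iff_integrableOn_Ioc_of_le zero_le_one] at h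
  refine hr.mono' ?_ ?_
  · apply Measurable.aestronglyMeasurable
    fun_prop
  · filter_upwards [ae_restrict_mem measurableSet_Ioc] with r hr'
    have h0 : (0:ℝ) ≤ r ^ (2 * θ) := Real.rpow_nonneg hr'.1.le _
    have h1 : (1 + r ^ (2 * θ)) ^ (-t) ≤ 1 :=
      Real.rpow_le_one_of_one_le_of_nonpos (by linarith) (by linarith)
    have h2 : (0:ℝ) < r ^ q := Real.rpow_pos_of_pos hr'.1 q
    rw [Real.norm_eq_abs, abs_of_nonneg (by positivity)]
    nlinarith [Real.rpow_nonneg (show (0:ℝ) ≤ 1 + r ^ (2*θ) by linarith) (-t)]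

theorem Ip_2theta_asymptotics (θ q : ℝ) (hθ : 0 < θ) (hq : -1 < q) :
    ∃ C₁ C₂ T : ℝ, 0 < C₁ ∧ 0 < C₂ ∧ 0 < T ∧
      ∀ t : ℝ, T ≤ t →
        (C₁/θ) * t ^ (-(q+1)/(2*θ)) ≤ ∫ r in (0:ℝ)..1, (1 + r ^ (2*θ)) ^ (-t) * r ^ q ∧
        (∫ r in (0:ℝ)..1, (1 + r ^ (2*θ)) ^ (-t) * r ^ q) ≤ (C₂/θ) * t ^ (-(q+1)/(2*θ)) := by
  have hp : (0:ℝ) < 2 * θ := by positivity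
  set p : ℝ := 2 * θ with hp_def
  set α : ℝ := (q + 1) / p with hα_def
  have hα : 0 < α := div_pos (by linarith) hp
  set G : ℝ := Real.Gamma α with hG_def
  have hG : 0 < G := Real.Gamma_pos_of_pos hα
  have h2α : (0:ℝ) < 2 ^ α := Real.rpow_pos_of_pos two_pos α
  refine ⟨G / 4, 2 ^ α * G / 2, max 1 (2 * (α + 1) * Real.log 2), by positivity,
    by positivity, lt_of_lt_of_le one_pos (le_max_left _ _), ?_⟩
  intro t ht
  have ht1 : (1:ℝ) ≤ t := le_trans (le_max_left _ _) ht
  have ht0 : (0:ℝ) < t := by linarith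
  have hexp : -(q + 1) / (2 * θ) = -α := by rw [hα_def, hp_def]; ring
  rw [hexp]
  have htα : (0:ℝ) < t ^ (-α) := Real.rpow_pos_of_pos ht0 _
  -- the Gamma-type integral
  have hI : ∀ b : ℝ, 0 < b →
      ∫ x in Ioi (0:ℝ), x ^ q * exp (-b * x ^ p) = b ^ (-α) * (1 / p) * G := by
    intro b hb
    rw [integral_rpow_mul_exp_neg_mul_rpow hp hq hb, neg_div]
  have hhalf : (0:ℝ) < t / 2 := by positivity
  have hdiv : (t / 2) ^ (-α) = t ^ (-α) * 2 ^ α := by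
    rw [Real.div_rpow ht0.le (by norm_num), Real.rpow_neg (by norm_num : (0:ℝ) ≤ 2),
      div_eq_mul_inv, inv_inv]
  -- integrability
  have hg1 := aux_integrable hp hq ht0
  have hg2 := aux_integrable hp hq hhalf
  have hf_int : IntervalIntegrable (fun r : ℝ => (1 + r ^ p) ^ (-t) * r ^ q) volume 0 1 :=
    (intervalIntegrable_iff_integrableOn_Ioc_of_le zero_le_one).mpr (aux_f_int hq ht0.le)
  have hg1_int : IntervalIntegrable (fun r : ℝ => r ^ q * exp (-t * r ^ p)) volume 0 1 :=
    (intervalIntegrable_iff_integrableOn_Ioc_of_le zero_le_one).mpr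
      (hg1.mono_set Ioc_subset_Ioi_self)
  have hg2_int : IntervalIntegrable (fun r : ℝ => r ^ q * exp (-(t/2) * r ^ p)) volume 0 1 :=
    (intervalIntegrable_iff_integrableOn_Ioc_of_le zero_le_one).mpr
      (hg2.mono_set Ioc_subset_Ioi_self)
  constructor
  · -- lower bound
    have step1 : ∫ r in (0:ℝ)..1, r ^ q * exp (-t * r ^ p)
        ≤ ∫ r in (0:ℝ)..1, (1 + r ^ p) ^ (-t) * r ^ q := by
      refine intervalIntegral.integral_mono_on zero_le_one hg1_int hf_int fun r hr => ?_
      have hx0 : (0:ℝ) ≤ r ^ p := Real.rpow_nonneg hr.1 _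
      have := aux_B (x := r ^ p) (t := t) hx0 ht0.le
      have hrq : (0:ℝ) ≤ r ^ q := Real.rpow_nonneg hr.1 _
      calc r ^ q * exp (-t * r ^ p) ≤ r ^ q * (1 + r ^ p) ^ (-t) :=
            mul_le_mul_of_nonneg_left this hrq
        _ = (1 + r ^ p) ^ (-t) * r ^ q := mul_comm _ _
    have hsplit : ∫ x in Ioi (0:ℝ), x ^ q * exp (-t * x ^ p)
        = (∫ x in Ioc (0:ℝ) 1, x ^ q * exp (-t * x ^ p))
          + ∫ x in Ioi (1:ℝ), x ^ q * exp (-t * x ^ p) := by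
      rw [← setIntegral_union (Ioc_disjoint_Ioi le_rfl) measurableSet_Ioi
        (hg1.mono_set Ioc_subset_Ioi_self) (hg1.mono_set (Ioi_subset_Ioi zero_le_one)),
        Set.Ioc_union_Ioi_eq_Ioi zero_le_one]
    have htail : ∫ x in Ioi (1:ℝ), x ^ q * exp (-t * x ^ p)
        ≤ exp (-(t/2)) * ((t/2) ^ (-α) * (1 / p) * G) := by
      have step2 : ∫ x in Ioi (1:ℝ), x ^ q * exp (-t * x ^ p)
          ≤ ∫ x in Ioi (1:ℝ), exp (-(t/2)) * (x ^ q * exp (-(t/2) * x ^ p)) := by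
        refine setIntegral_mono_on (hg1.mono_set (Ioi_subset_Ioi zero_le_one))
          ((hg2.mono_set (Ioi_subset_Ioi zero_le_one)).const_mul _)
          measurableSet_Ioi fun x hx => ?_
      -- x ∈ Ioi 1
        have hx1 : (1:ℝ) ≤ x ^ p := Real.one_le_rpow (le_of_lt hx) hp.le
        have hrq : (0:ℝ) ≤ x ^ q := Real.rpow_nonneg (by linarith [mem_Ioi.mp hx]) _
        rw [show exp (-(t/2)) * (x ^ q * exp (-(t/2) * x ^ p))
            = x ^ q * (exp (-(t/2)) * exp (-(t/2) * x ^ p)) by ring, ← Real.exp_add]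
        exact mul_le_mul_of_nonneg_left (Real.exp_le_exp.2 (by nlinarith)) hrq
      have step3 : ∫ x in Ioi (1:ℝ), exp (-(t/2)) * (x ^ q * exp (-(t/2) * x ^ p))
          = exp (-(t/2)) * ∫ x in Ioi (1:ℝ), x ^ q * exp (-(t/2) * x ^ p) :=
        integral_const_mul _ _
      have step4 : ∫ x in Ioi (1:ℝ), x ^ q * exp (-(t/2) * x ^ p)
          ≤ ∫ x in Ioi (0:ℝ), x ^ q * exp (-(t/2) * x ^ p) := by
        refine setIntegral_mono_set hg2 ?_ (HasSubset.Subset.eventuallyLE (Ioi_subset_Ioi zero_le_one))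
        filter_upwards [ae_restrict_mem measurableSet_Ioi] with x hx
        have : (0:ℝ) ≤ x ^ q := Real.rpow_nonneg (le_of_lt hx) _
        positivity
      calc ∫ x in Ioi (1:ℝ), x ^ q * exp (-t * x ^ p)
          ≤ exp (-(t/2)) * ∫ x in Ioi (1:ℝ), x ^ q * exp (-(t/2) * x ^ p) := by
            rw [← step3]; exact step2
        _ ≤ exp (-(t/2)) * ∫ x in Ioi (0:ℝ), x ^ q * exp (-(t/2) * x ^ p) :=
            mul_le_mul_of_nonneg_left step4 (exp_nonneg _)
        _ = exp (-(t/2)) * ((t/2) ^ (-α) * (1 / p) * G) := by rw [hI _ hhalf]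
    have hsmall : 2 ^ α * exp (-(t/2)) ≤ 1/2 := by
      have hT2 : 2 * (α + 1) * Real.log 2 ≤ t := le_trans (le_max_right _ _) ht
      have e1 : exp (-(t/2)) ≤ exp (-((α + 1) * Real.log 2)) :=
        Real.exp_le_exp.2 (by linarith)
      have e2 : exp (-((α + 1) * Real.log 2)) = 2 ^ (-(α + 1)) := by
        rw [Real.rpow_def_of_pos two_pos]; ring_nf
      have e3 : (2:ℝ) ^ α * 2 ^ (-(α + 1)) = 1/2 := by
        rw [← Real.rpow_add two_pos, show α + -(α+1) = -1 by ring, Real.rpow_neg_one]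
        norm_num
      calc 2 ^ α * exp (-(t/2)) ≤ (2:ℝ) ^ α * 2 ^ (-(α + 1)) := by
            rw [← e2]; exact mul_le_mul_of_nonneg_left e1 h2α.le
        _ = 1/2 := e3
    have hmain : ∫ r in (0:ℝ)..1, r ^ q * exp (-t * r ^ p)
        = t ^ (-α) * (1 / p) * G - ∫ x in Ioi (1:ℝ), x ^ q * exp (-t * x ^ p) := by
      rw [intervalIntegral.integral_of_le zero_le_one, ← hI t ht0, hsplit]
      ring
    have h5 : exp (-(t/2)) * ((t/2) ^ (-α) * (1 / p) * G)
        ≤ (1/2) * (t ^ (-α) * (1 / p) * G) := by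
      rw [hdiv]
      calc exp (-(t/2)) * (t ^ (-α) * 2 ^ α * (1 / p) * G)
          = (2 ^ α * exp (-(t/2))) * (t ^ (-α) * (1 / p) * G) := by ring
        _ ≤ (1/2) * (t ^ (-α) * (1 / p) * G) := by
            refine mul_le_mul_of_nonneg_right hsmall ?_
            positivity
    have h6 : (G/4)/θ * t ^ (-α) = t ^ (-α) * (1 / p) * G - 1/2 * (t ^ (-α) * (1 / p) * G) := by
      rw [hp_def]
      field_simp
      ring
    have : (G/4)/θ * t ^ (-α) ≤ ∫ r in (0:ℝ)..1, r ^ q * exp (-t * r ^ p) := by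
      rw [hmain, h6]
      linarith [htail, h5]
    linarith [step1]
  · -- upper bound
    have step1 : ∫ r in (0:ℝ)..1, (1 + r ^ p) ^ (-t) * r ^ q
        ≤ ∫ r in (0:ℝ)..1, r ^ q * exp (-(t/2) * r ^ p) := by
      refine intervalIntegral.integral_mono_on zero_le_one hf_int hg2_int fun r hr => ?_
      have hx0 : (0:ℝ) ≤ r ^ p := Real.rpow_nonneg hr.1 _
      have hx1 : r ^ p ≤ 1 := Real.rpow_le_one hr.1 hr.2 hp.le
      have := aux_A (x := r ^ p) (t := t) hx0 hx1 ht0.le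
      have hrq : (0:ℝ) ≤ r ^ q := Real.rpow_nonneg hr.1 _
      calc (1 + r ^ p) ^ (-t) * r ^ q ≤ exp (-(t/2) * r ^ p) * r ^ q :=
            mul_le_mul_of_nonneg_right this hrq
        _ = r ^ q * exp (-(t/2) * r ^ p) := mul_comm _ _
    have step2 : ∫ r in (0:ℝ)..1, r ^ q * exp (-(t/2) * r ^ p)
        ≤ ∫ x in Ioi (0:ℝ), x ^ q * exp (-(t/2) * x ^ p) := by
      rw [intervalIntegral.integral_of_le zero_le_one]
      refine setIntegral_mono_set hg2 ?_ (HasSubset.Subset.eventuallyLE Ioc_subset_Ioi_self)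
      filter_upwards [ae_restrict_mem measurableSet_Ioi] with x hx
      have : (0:ℝ) ≤ x ^ q := Real.rpow_nonneg (le_of_lt hx) _
      positivity
    have : ∫ x in Ioi (0:ℝ), x ^ q * exp (-(t/2) * x ^ p)
        = (2 ^ α * G / 2) / θ * t ^ (-α) := by
      rw [hI _ hhalf, hdiv, hp_def]
      field_simp
    linarith [step1, step2]
end

section
/- Let 0 < θ < 1/2 and suppose r ∈ (0,1] satisfies 25 r^(4−4θ) ≤ r² and (3/4)(log(1+r^(2θ)))² ≥ 4r². Then λ₊ := (−log(1+r^(2θ)) + √((log(1+r^(2θ)))² − 4r²))/2 satisfies −(5/2) r^(2−2θ) ≤ λ₊ ≤ −(1/2) r^(2−2θ). -/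
theorem lambda_plus_bounds (θ r : ℝ) (hθ : 0 < θ) (hθ' : θ < 1/2)
    (hr : r ∈ Set.Ioc (0:ℝ) 1)
    (h1 : 25 * r ^ (4 - 4*θ) ≤ r^2)
    (h2 : (3/4) * (Real.log (1 + r ^ (2*θ)))^2 ≥ 4 * r^2) :
    -(5/2) * r ^ (2 - 2*θ) ≤
      (-Real.log (1 + r ^ (2*θ)) + Real.sqrt ((Real.log (1 + r ^ (2*θ)))^2 - 4 * r^2))/2 ∧
    (-Real.log (1 + r ^ (2*θ)) + Real.sqrt ((Real.log (1 + r ^ (2*θ)))^2 - 4 * r^2))/2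
      ≤ -(1/2) * r ^ (2 - 2*θ) := by
  obtain ⟨hr0, hr1⟩ := hr
  set x := r ^ (2*θ) with hxdef
  set y := r ^ (2 - 2*θ) with hydef
  set L := Real.log (1 + x) with hLdef
  have hx0 : 0 < x := Real.rpow_pos_of_pos hr0 _
  have hy0 : 0 < y := Real.rpow_pos_of_pos hr0 _
  have hx1 : x ≤ 1 := Real.rpow_le_one hr0.le hr1 (by linarith)
  have hxy : x * y = r ^ 2 := by
    rw [hxdef, hydef, ← Real.rpow_add hr0, ← Real.rpow_natCast r 2]
    norm_num
  have hy2 : y ^ 2 = r ^ (4 - 4*θ) := by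
    rw [hydef, ← Real.rpow_natCast (r ^ (2 - 2*θ)) 2, ← Real.rpow_mul hr0.le]
    norm_num
    ring_nf
  have h1' : 25 * y ^ 2 ≤ r ^ 2 := by rw [hy2]; exact h1
  have h1x : (0:ℝ) < 1 + x := by linarith
  have hLx : L ≤ x := by
    have := Real.log_le_sub_one_of_pos h1x
    linarith
  have hLx2 : x / 2 ≤ L := by
    have h := Real.log_le_sub_one_of_pos (show (0:ℝ) < (1+x)⁻¹ by positivity)
    rw [Real.log_inv] at h
    have hic : (1+x) * (1+x)⁻¹ = 1 := mul_inv_cancel₀ (ne_of_gt h1x)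
    nlinarith [h, hic, hx0, hx1]
  have hL0 : 0 < L := lt_of_lt_of_le (by linarith) hLx2
  have hD : 0 ≤ L^2 - 4*r^2 := by nlinarith [sq_nonneg L]
  set D := L^2 - 4*r^2 with hDdef
  set s := Real.sqrt D with hsdef
  have hs : 0 ≤ s := Real.sqrt_nonneg D
  have hs2 : s ^ 2 = D := Real.sq_sqrt hD
  have h25 : 25 * y ≤ x := by nlinarith [hxy, h1', hy0]
  -- upper bound: s ≤ L - y
  have hupper : s ≤ L - y := by
    have hDle : D ≤ (L - y)^2 := by
      nlinarith [mul_le_mul_of_nonneg_right hLx hy0.le, hxy, sq_nonneg y]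
    have hLy : 0 ≤ L - y := by linarith
    calc s ≤ Real.sqrt ((L - y)^2) := Real.sqrt_le_sqrt hDle
      _ = L - y := by rw [Real.sqrt_sq hLy]
  -- lower bound: L - 5y ≤ s
  have hlower : L - 5*y ≤ s := by
    have key : (L - 5*y)^2 ≤ D := by
      nlinarith [mul_le_mul_of_nonneg_right hLx2 hy0.le, hxy, h1']
    have hpos : 0 ≤ L - 5*y := by linarith
    calc L - 5*y = Real.sqrt ((L - 5*y)^2) := (Real.sqrt_sq hpos).symm
      _ ≤ s := Real.sqrt_le_sqrt key
  constructor <;> linarith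
end
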